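/- The set S_{(s,0)} is nowhere dense in ℝ. -/

import Mathlib

open Finset

/-- The term of the series: `c n / s ^ (c 1 + ... + c (n+1))` (0-indexed). -/
noncomputable def sTerm (s : ℕ) (c : ℕ → ℕ) (n : ℕ) : ℝ :=
  (c n : ℝ) / (s : ℝ) ^ (∑ k ∈ Finset.range (n + 1), c k)

/-- `x = Σ_{k=1}^∞ c_k / s^{c_1+⋯+c_k}`. -/
noncomputable def sVal (s : ℕ) (c : ℕ → ℕ) : ℝ := ∑' n : ℕ, sTerm s c n

/-- The sequence `(c_k)` has all terms in `{1, ..., s-1}`. -/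
def sValid (s : ℕ) (c : ℕ → ℕ) : Prop := ∀ k, 1 ≤ c k ∧ c k ≤ s - 1

/-- The set `S_{(s,0)}`. -/
def Sset (s : ℕ) : Set ℝ := { x | ∃ c : ℕ → ℕ, sValid s c ∧ x = sVal s c }

/-- The cylinder `Δ'_{c_1 ... c_n}` of rank `n` with base the first `n` terms of `c`. -/
def cyl (s n : ℕ) (c : ℕ → ℕ) : Set ℝ :=
  { x | ∃ c' : ℕ → ℕ, sValid s c' ∧ (∀ k < n, c' k = c k) ∧ x = sVal s c' }

/-- The cylinder `Δ'_{c_1 ... c_n p}`: prefix of length `n` from `c`, next digit `p`. -/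
def cylExt (s n : ℕ) (c : ℕ → ℕ) (p : ℕ) : Set ℝ :=
  { x | ∃ c' : ℕ → ℕ, sValid s c' ∧ (∀ k < n, c' k = c k) ∧ c' n = p ∧ x = sVal s c' }

/-- `g_n = Σ_{k=1}^n c_k / s^{c_1+⋯+c_k}`. -/
noncomputable def gPart (s n : ℕ) (c : ℕ → ℕ) : ℝ := ∑ k ∈ Finset.range n, sTerm s c k

/-!
Every point of `S_{(s,0)}` whose first `n` digits are fixed lies in an interval of length
`s⁻¹ ^ n` starting at the partial sum `g_n`, because each digit is at least `1` and so the
`k`-th term is at most `(s - 1) / s ^ k`. Hence `S_{(s,0)}` is covered by `(s - 1) ^ n` closed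
intervals of total length `((s - 1) / s) ^ n → 0`; the intersection of these covers is a closed
null set, which has empty interior.
-/

open MeasureTheory Filter Set Topology

theorem IsNowhereDense.of_forall_subset_isClosed {X : Type*} [TopologicalSpace X]
    [MeasurableSpace X] {μ : Measure X} [μ.IsOpenPosMeasure] {S : Set X} {U : ℕ → Set X}
    (hU : ∀ n, IsClosed (U n)) (hSU : ∀ n, S ⊆ U n)
    (hμU : Tendsto (fun n ↦ μ (U n)) atTop (𝓝 0)) : IsNowhereDense S := by
  have hnull : μ (⋂ n, U n) = 0 :=
    le_antisymm (ge_of_tendsto' hμU fun n ↦ measure_mono (iInter_subset U n)) bot_le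
  exact (IsNowhereDense.of_isClosed_null (isClosed_iInter hU) hnull).mono (subset_iInter hSU)

section Digits

variable {s : ℕ} {c : ℕ → ℕ}

lemma sValid.two_le (hc : sValid s c) : 2 ≤ s := by
  have := hc 0; omega

lemma sTerm_nonneg (n : ℕ) : 0 ≤ sTerm s c n := by
  unfold sTerm; positivity

lemma sTerm_le (hc : sValid s c) (n : ℕ) : sTerm s c n ≤ ((s : ℝ) - 1) / s ^ (n + 1) := by
  have hs : (1 : ℝ) ≤ s := by exact_mod_cast (hc.two_le.trans' one_le_two)
  have hdigit : (c n : ℝ) ≤ s - 1 := by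
    have hcn : c n + 1 ≤ s := by have := hc n; omega
    rw [le_sub_iff_add_le]; exact_mod_cast hcn
  have hexp : n + 1 ≤ ∑ k ∈ range (n + 1), c k := by
    simpa using card_nsmul_le_sum (range (n + 1)) c 1 fun k _ ↦ (hc k).1
  exact div_le_div₀ (by linarith) hdigit (by positivity) (pow_le_pow_right₀ hs hexp)

lemma hasSum_tail_bound (hs : 1 < s) (n : ℕ) :
    HasSum (fun i ↦ ((s : ℝ) - 1) / s ^ (i + n + 1)) ((s : ℝ)⁻¹ ^ n) := by
  have hs' : (1 : ℝ) < s := by exact_mod_cast hs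
  have hr : (s : ℝ)⁻¹ < 1 := inv_lt_one_of_one_lt₀ hs'
  have hsum : ((s : ℝ) - 1) / s ^ (n + 1) * (1 - (s : ℝ)⁻¹)⁻¹ = (s : ℝ)⁻¹ ^ n := by
    have : (s : ℝ) - 1 ≠ 0 := by linarith
    rw [inv_pow]; field_simp; ring
  have hterm (i : ℕ) : ((s : ℝ) - 1) / s ^ (n + 1) * (s : ℝ)⁻¹ ^ i
      = ((s : ℝ) - 1) / s ^ (i + n + 1) := by
    rw [inv_pow]; field_simp; ring
  simpa only [hsum, hterm] using (hasSum_geometric_of_lt_one (by positivity) hr).mul_left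
    (((s : ℝ) - 1) / s ^ (n + 1))

lemma sTerm_summable (hc : sValid s c) : Summable (sTerm s c) :=
  (hasSum_tail_bound hc.two_le 0).summable.of_nonneg_of_le sTerm_nonneg (sTerm_le hc)

lemma sVal_mem_Icc_gPart (hc : sValid s c) (n : ℕ) :
    sVal s c ∈ Icc (gPart s n c) (gPart s n c + (s : ℝ)⁻¹ ^ n) := by
  have hsplit := (sTerm_summable hc).sum_add_tsum_nat_add n
  have htail : ∑' i, sTerm s c (i + n) ≤ (s : ℝ)⁻¹ ^ n :=
    hasSum_le (fun i ↦ sTerm_le hc (i + n))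
      ((sTerm_summable hc).comp_injective (add_left_injective n)).hasSum
      (hasSum_tail_bound hc.two_le n)
  have htail_nonneg : 0 ≤ ∑' i, sTerm s c (i + n) := tsum_nonneg fun i ↦ sTerm_nonneg _
  unfold sVal gPart
  constructor <;> linarith

lemma gPart_congr {c' : ℕ → ℕ} (n : ℕ) (h : ∀ k < n, c' k = c k) :
    gPart s n c' = gPart s n c := by
  refine sum_congr rfl fun k hk ↦ ?_
  have hprefix : ∑ j ∈ range (k + 1), c' j = ∑ j ∈ range (k + 1), c j :=
    sum_congr rfl fun j hj ↦ h j (by grind)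
  rw [sTerm, sTerm, h k (by grind), hprefix]

end Digits

def digitsOfPrefix {s n : ℕ} (d : Fin n → Fin (s - 1)) (k : ℕ) : ℕ :=
  if h : k < n then d ⟨k, h⟩ + 1 else 1

noncomputable def cylinderCover (s n : ℕ) : Set ℝ :=
  ⋃ d : Fin n → Fin (s - 1),
    Icc (gPart s n (digitsOfPrefix d)) (gPart s n (digitsOfPrefix d) + (s : ℝ)⁻¹ ^ n)

lemma isClosed_cylinderCover (s n : ℕ) : IsClosed (cylinderCover s n) :=
  isClosed_iUnion_of_finite fun _ ↦ isClosed_Icc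

lemma Sset_subset_cylinderCover (s n : ℕ) : Sset s ⊆ cylinderCover s n := by
  rintro x ⟨c, hc, rfl⟩
  let d : Fin n → Fin (s - 1) := fun i ↦ ⟨c i - 1, by have := hc i; omega⟩
  have hd : gPart s n (digitsOfPrefix d) = gPart s n c :=
    gPart_congr n fun k hk ↦ by have := hc k; simp [digitsOfPrefix, d, hk]; omega
  exact mem_iUnion.2 ⟨d, hd ▸ sVal_mem_Icc_gPart hc n⟩

lemma volume_cylinderCover_le (s n : ℕ) :
    volume (cylinderCover s n) ≤ ENNReal.ofReal ((((s - 1 : ℕ) : ℝ) / s) ^ n) := by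
  calc volume (cylinderCover s n)
      ≤ ∑ d : Fin n → Fin (s - 1), volume
          (Icc (gPart s n (digitsOfPrefix d)) (gPart s n (digitsOfPrefix d) + (s : ℝ)⁻¹ ^ n)) :=
        measure_iUnion_fintype_le _ _
    _ = ((s - 1) ^ n : ℕ) * ENNReal.ofReal ((s : ℝ)⁻¹ ^ n) := by
        simp [Real.volume_Icc, Finset.card_univ, nsmul_eq_mul]
    _ = ENNReal.ofReal ((((s - 1 : ℕ) : ℝ) / s) ^ n) := by
        rw [← ENNReal.ofReal_natCast, ← ENNReal.ofReal_mul (by positivity), div_eq_mul_inv,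
          mul_pow, Nat.cast_pow]

lemma tendsto_volume_cylinderCover {s : ℕ} (hs : 0 < s) :
    Tendsto (fun n ↦ volume (cylinderCover s n)) atTop (𝓝 0) := by
  have hratio : ((s - 1 : ℕ) : ℝ) / s < 1 := by
    rw [div_lt_one (by positivity)]; exact_mod_cast Nat.sub_lt hs one_pos
  have hpow := ENNReal.tendsto_ofReal (tendsto_pow_atTop_nhds_zero_of_lt_one (by positivity) hratio)
  rw [ENNReal.ofReal_zero] at hpow
  exact tendsto_of_tendsto_of_tendsto_of_le_of_le tendsto_const_nhds hpow (fun _ ↦ bot_le)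
    (volume_cylinderCover_le s)

theorem stmt14 (s : ℕ) (hs : 2 < s) : IsNowhereDense (Sset s) :=
  IsNowhereDense.of_forall_subset_isClosed (μ := volume) (isClosed_cylinderCover s)
    (Sset_subset_cylinderCover s) (tendsto_volume_cylinderCover (by omega))
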